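/- (Correctness of the 6-user scheme from the PDA of Eq. (7).) Let V be a vector space over GF(2) (⊕ denoting addition), N ≥ 1, and W : Fin N → Fin 4 → V a library of N files of 4 subfiles each. Define the caches Z'₀ = (W(i,0), W(i,2))_{i}, Z'₁ = (W(i,1), W(i,3))_{i}, Z'₂ = (W(i,0), W(i,1))_{i}, Z'₃ = (W(i,2), W(i,3))_{i}, Z'₄ = (W(i,0), W(i,3))_{i}, Z'₅ = (W(i,1), W(i,2))_{i} (each over all i ∈ Fin N), and for a demand vector d' : Fin 6 → Fin N the transmission X(d') with four components: W(d'(0),1) ⊕ W(d'(2),2) ⊕ W(d'(5),0); W(d'(1),0) ⊕ W(d'(2),3) ⊕ W(d'(4),1); W(d'(0),3) ⊕ W(d'(3),0) ⊕ W(d'(4),2); W(d'(1),2) ⊕ W(d'(3),1) ⊕ W(d'(5),3). Then for every demand vector d' and every user j ∈ Fin 6 there exists a decoding function dec (depending on d' and j but not on W) such that dec(Z'_j(W), X(d')(W)) = W(d'(j)) for every library W. -/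
import Mathlib


/-- The pair of subfile indices cached by each of the 6 users in the scheme from
the PDA of Eq. (7): user `j` caches subfiles `(pdaCacheIdx j).1` and
`(pdaCacheIdx j).2` of every file. -/
def pdaCacheIdx : Fin 6 → Fin 4 × Fin 4 :=
  ![(0, 2), (1, 3), (0, 1), (2, 3), (0, 3), (1, 2)]

/-- The cache `Z'_j` of user `j`: the indicated pair of subfiles of every file
`i ∈ Fin N`. -/
def pdaCache {V : Type*} [AddCommGroup V] (N : ℕ) (j : Fin 6)
    (W : Fin N → Fin 4 → V) : Fin N → V × V :=
  fun i => (W i (pdaCacheIdx j).1, W i (pdaCacheIdx j).2)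

/-- The four components of the transmission `X(d')` for a demand vector
`d' : Fin 6 → Fin N` (⊕ is addition in `V`). -/
def pdaTx {V : Type*} [AddCommGroup V] (N : ℕ) (d' : Fin 6 → Fin N)
    (W : Fin N → Fin 4 → V) : Fin 4 → V :=
  ![W (d' 0) 1 + W (d' 2) 2 + W (d' 5) 0,
    W (d' 1) 0 + W (d' 2) 3 + W (d' 4) 1,
    W (d' 0) 3 + W (d' 3) 0 + W (d' 4) 2,
    W (d' 1) 2 + W (d' 3) 1 + W (d' 5) 3]

lemma pdaIdx0 : pdaCacheIdx 0 = (0, 2) := rfl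
lemma pdaIdx1 : pdaCacheIdx 1 = (1, 3) := rfl
lemma pdaIdx2 : pdaCacheIdx 2 = (0, 1) := rfl
lemma pdaIdx3 : pdaCacheIdx 3 = (2, 3) := rfl
lemma pdaIdx4 : pdaCacheIdx 4 = (0, 3) := rfl
lemma pdaIdx5 : pdaCacheIdx 5 = (1, 2) := rfl

set_option maxHeartbeats 1000000 in
/-- Correctness of the `(6, N; M=1, R=1)` non-private coded caching scheme
obtained from the `(6, 4, 2, 4)` placement delivery array of Eq. (7): for every
demand vector `d'` and every user `j` there is a decoding function (depending on
`d'` and `j` but not on the library `W`) recovering the demanded file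
`W (d' j)` from the cache `Z'_j` and the transmission `X(d')`. -/
theorem pda_six_user_scheme_correct (V : Type*) [AddCommGroup V]
    [Module (ZMod 2) V] (N : ℕ) (hN : 1 ≤ N)
    (d' : Fin 6 → Fin N) (j : Fin 6) :
    ∃ dec : (Fin N → V × V) → (Fin 4 → V) → (Fin 4 → V),
      ∀ W : Fin N → Fin 4 → V,
        dec (pdaCache N j W) (pdaTx N d' W) = W (d' j) := by
  fin_cases j
  · exact ⟨fun Z X => ![(Z (d' 0)).1, X 0 - (Z (d' 2)).2 - (Z (d' 5)).1,
      (Z (d' 0)).2, X 2 - (Z (d' 3)).1 - (Z (d' 4)).2],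
      fun W => by funext i; fin_cases i <;> simp [pdaCache, pdaTx, pdaIdx0, pdaIdx1, pdaIdx2, pdaIdx3, pdaIdx4, pdaIdx5] <;> abel⟩
  · exact ⟨fun Z X => ![X 1 - (Z (d' 2)).2 - (Z (d' 4)).1, (Z (d' 1)).1,
      X 3 - (Z (d' 3)).1 - (Z (d' 5)).2, (Z (d' 1)).2],
      fun W => by funext i; fin_cases i <;> simp [pdaCache, pdaTx, pdaIdx0, pdaIdx1, pdaIdx2, pdaIdx3, pdaIdx4, pdaIdx5] <;> abel⟩
  · exact ⟨fun Z X => ![(Z (d' 2)).1, (Z (d' 2)).2,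
      X 0 - (Z (d' 0)).2 - (Z (d' 5)).1, X 1 - (Z (d' 1)).1 - (Z (d' 4)).2],
      fun W => by funext i; fin_cases i <;> simp [pdaCache, pdaTx, pdaIdx0, pdaIdx1, pdaIdx2, pdaIdx3, pdaIdx4, pdaIdx5] <;> abel⟩
  · exact ⟨fun Z X => ![X 2 - (Z (d' 0)).2 - (Z (d' 4)).1, X 3 - (Z (d' 1)).1 - (Z (d' 5)).2,
      (Z (d' 3)).1, (Z (d' 3)).2],
      fun W => by funext i; fin_cases i <;> simp [pdaCache, pdaTx, pdaIdx0, pdaIdx1, pdaIdx2, pdaIdx3, pdaIdx4, pdaIdx5] <;> abel⟩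
  · exact ⟨fun Z X => ![(Z (d' 4)).1, X 1 - (Z (d' 1)).1 - (Z (d' 2)).2,
      X 2 - (Z (d' 0)).2 - (Z (d' 3)).1, (Z (d' 4)).2],
      fun W => by funext i; fin_cases i <;> simp [pdaCache, pdaTx, pdaIdx0, pdaIdx1, pdaIdx2, pdaIdx3, pdaIdx4, pdaIdx5] <;> abel⟩
  · exact ⟨fun Z X => ![X 0 - (Z (d' 0)).1 - (Z (d' 2)).2, (Z (d' 5)).1,
      (Z (d' 5)).2, X 3 - (Z (d' 1)).2 - (Z (d' 3)).1],
      fun W => by funext i; fin_cases i <;> simp [pdaCache, pdaTx, pdaIdx0, pdaIdx1, pdaIdx2, pdaIdx3, pdaIdx4, pdaIdx5] <;> abel⟩
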